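/- Let g(u) = (1/3)·exp(−(1−u)^{−1/4}) on the slit plane ℂ \ [1,∞) (branch −π ≤ arg(1−u) < π), extended by g(1) = 0. If q(u,w) is a holomorphic function on a polydisc Δ centered at (1,0) ∈ ℂ² such that the function (u,w) ↦ w·g(u) − q(u,w) vanishes identically on an open subset of Δ intersected with the slit domain whose closure contains (1,0), then q vanishes identically on Δ, and hence g vanishes identically near u = 1 — a contradiction since g is nonvanishing away from u = 1. In particular, no holomorphic function q on a neighborhood of (1,0) agrees with w·g(u) on any open subset of the slit domain accumulating at (1,0). -/

import Mathlib

/-- `g(u) = (1/3)·exp(−(1−u)^{−1/4})` on the slit plane, extended by `g(1) = 0`. -/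
noncomputable def gSlit (u : ℂ) : ℂ :=
  if u = 1 then 0 else (1 / 3 : ℂ) * Complex.exp (-((1 - u) ^ ((-1 / 4 : ℂ))))

/-- The slit disc of radius `ρ` around `1`. -/
def slitDisc (ρ : ℝ) : Set ℂ :=
  Metric.ball (1 : ℂ) ρ ∩ {z : ℂ | z.im ≠ 0 ∨ z.re < 1}

lemma slitDisc_isOpen (ρ : ℝ) : IsOpen (slitDisc ρ) := by
  refine Metric.isOpen_ball.inter (IsOpen.union ?_ ?_)
  · exact isOpen_ne.preimage Complex.continuous_im
  · exact (isOpen_Iio).preimage Complex.continuous_re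

lemma slitDisc_starConvex {ρ : ℝ} (hρ : 0 < ρ) :
    StarConvex ℝ ((1 : ℂ) - (ρ / 2 : ℝ)) (slitDisc ρ) := by
  have hc : ((1 : ℂ) - (ρ / 2 : ℝ)) ∈ slitDisc ρ := by
    constructor
    · rw [Metric.mem_ball, dist_eq_norm]
      simp only [sub_sub_cancel_left, norm_neg, Complex.norm_real, Real.norm_eq_abs]
      rw [abs_of_pos (by linarith)]; linarith
    · right
      simp only [Complex.sub_re, Complex.one_re, Complex.ofReal_re, Set.mem_setOf_eq]
      linarith
  intro y hy a b ha hb hab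
  constructor
  · exact (convex_ball (1 : ℂ) ρ) hc.1 hy.1 ha hb hab
  · -- slit condition
    have him : (a • ((1 : ℂ) - (ρ / 2 : ℝ)) + b • y).im = b * y.im := by
      simp [Complex.add_im, Complex.smul_im, Complex.sub_im]
    have hre : (a • ((1 : ℂ) - (ρ / 2 : ℝ)) + b • y).re = a * (1 - ρ / 2) + b * y.re := by
      simp [Complex.add_re, Complex.smul_re, Complex.sub_re]
    rcases hy.2 with hyim | hyre
    · rcases eq_or_lt_of_le hb with hb0 | hb0
      · -- b = 0, point is the center
        right
        rw [hre, ← hb0]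
        have : a = 1 := by linarith
        rw [this]; simp; linarith
      · left
        rw [him]
        exact mul_ne_zero (ne_of_gt hb0) hyim
    · right
      rw [hre]
      rcases eq_or_lt_of_le ha with ha0 | ha0
      · rw [← ha0]
        have : b = 1 := by linarith
        rw [this]; simpa using hyre
      · nlinarith
  
lemma slitDisc_isPreconnected {ρ : ℝ} (hρ : 0 < ρ) : IsPreconnected (slitDisc ρ) := by
  have hsc := slitDisc_starConvex hρ
  apply isPreconnected_of_forall ((1 : ℂ) - (ρ / 2 : ℝ))
  intro y hy
  refine ⟨segment ℝ ((1 : ℂ) - (ρ / 2 : ℝ)) y, hsc.segment_subset hy, ?_, ?_, ?_⟩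
  · exact left_mem_segment ℝ _ _
  · exact right_mem_segment ℝ _ _
  · exact (convex_segment _ _).isPreconnected

lemma mem_slitDisc_of_slit {ρ : ℝ} {z : ℂ} (hz : z ∈ Metric.ball (1 : ℂ) ρ)
    (hs : ∀ r : ℝ, 1 ≤ r → z ≠ (r : ℂ)) : z ∈ slitDisc ρ := by
  refine ⟨hz, ?_⟩
  by_contra hcon
  simp only [Set.mem_setOf_eq, not_or, not_lt, ne_eq, not_not] at hcon
  obtain ⟨him, hre⟩ := hcon
  exact hs z.re hre (Complex.ext (by simp) (by simp [him]))

lemma slitDisc_ne_one' {ρ : ℝ} {z : ℂ} (hz : z ∈ slitDisc ρ) : z ≠ 1 := by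
  intro h
  rcases hz.2 with h1 | h1 <;> rw [h] at h1 <;> simp at h1

/-- no holomorphic function `q` on a polydisc around `(1,0) ∈ ℂ²`
can agree with `(u,w) ↦ w·g(u)` on an open subset of the polydisc contained in
the slit domain whose closure contains `(1,0)`: such a `q` would vanish
identically, forcing `g ≡ 0` near `u = 1`, a contradiction. -/
theorem stmt9 (ρ : ℝ) (hρ : 0 < ρ) (q : ℂ × ℂ → ℂ)
    (hq : DifferentiableOn ℂ q (Metric.ball ((1 : ℂ), (0 : ℂ)) ρ))
    (V : Set (ℂ × ℂ)) (hVopen : IsOpen V)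
    (hVball : V ⊆ Metric.ball ((1 : ℂ), (0 : ℂ)) ρ)
    (hVslit : ∀ p ∈ V, ∀ r : ℝ, 1 ≤ r → p.1 ≠ (r : ℂ))
    (hVacc : ((1 : ℂ), (0 : ℂ)) ∈ closure V)
    (heq : ∀ p ∈ V, p.2 * gSlit p.1 - q p = 0) :
    False := by
  classical
  -- V is nonempty; find a point of V with nonzero second coordinate
  have hVne : V.Nonempty := by
    rcases Set.eq_empty_or_nonempty V with h | h
    · rw [h, closure_empty] at hVacc; exact absurd hVacc (Set.notMem_empty _)
    · exact h
  obtain ⟨⟨u1, w1⟩, hp1⟩ := hVne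
  obtain ⟨u0, w0, hV0, hw0⟩ : ∃ u0 w0 : ℂ, (u0, w0) ∈ V ∧ w0 ≠ 0 := by
    by_cases hw1 : w1 ≠ 0
    · exact ⟨u1, w1, hp1, hw1⟩
    · push_neg at hw1
      obtain ⟨ε, hε, hball⟩ := Metric.isOpen_iff.1 hVopen _ hp1
      refine ⟨u1, w1 + (ε : ℂ) / 2, hball ?_, ?_⟩
      · rw [Metric.mem_ball, Prod.dist_eq]
        simp only [dist_self]
        rw [max_lt_iff]
        refine ⟨hε, ?_⟩
        rw [dist_eq_norm]
        have e1 : (w1 + (ε : ℂ) / 2) - w1 = (ε : ℂ) / 2 := by ring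
        rw [e1, norm_div]
        have e2 : ‖(ε : ℂ)‖ = ε := by
          rw [Complex.norm_real, Real.norm_eq_abs, abs_of_pos hε]
        have e3 : ‖(2 : ℂ)‖ = 2 := by norm_num
        rw [e2, e3]; linarith
      · rw [hw1, zero_add]
        intro hcon
        have : ε / 2 = 0 := by simpa using congrArg Complex.re hcon
        linarith
  have hw0ρ : dist w0 (0 : ℂ) < ρ := by
    have := hVball hV0
    rw [Metric.mem_ball, Prod.dist_eq, max_lt_iff] at this
    exact this.2
  -- the slice function
  set h : ℂ → ℂ := fun u => q (u, w0) with hh_def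
  have hmaps : ∀ u ∈ Metric.ball (1 : ℂ) ρ, (u, w0) ∈ Metric.ball ((1 : ℂ), (0 : ℂ)) ρ := by
    intro u hu
    rw [Metric.mem_ball, Prod.dist_eq, max_lt_iff]
    exact ⟨hu, hw0ρ⟩
  have hhdiff : DifferentiableOn ℂ h (Metric.ball (1 : ℂ) ρ) := by
    intro u hu
    have : DifferentiableWithinAt ℂ (fun v : ℂ => (v, w0)) (Metric.ball (1 : ℂ) ρ) u :=
      (differentiable_id.prodMk (differentiable_const w0)).differentiableAt.differentiableWithinAt
    exact (hq _ (hmaps u hu)).comp u this (fun v hv => hmaps v hv)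
  have hhA : AnalyticOnNhd ℂ h (Metric.ball (1 : ℂ) ρ) :=
    hhdiff.analyticOnNhd Metric.isOpen_ball
  -- the explicit function
  set G : ℂ → ℂ := fun u => w0 * ((1 / 3 : ℂ) * Complex.exp (-((1 - u) ^ ((-1 / 4 : ℂ))))) with hG_def
  have hGdiff : DifferentiableOn ℂ G (slitDisc ρ) := by
    intro u hu
    apply DifferentiableAt.differentiableWithinAt
    have hslit : (1 - u) ∈ Complex.slitPlane := by
      rw [Complex.mem_slitPlane_iff]
      rcases hu.2 with h1 | h1
      · right; simpa [Complex.sub_im] using h1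
      · left; simp only [Complex.sub_re, Complex.one_re]; linarith
    have hcpow : DifferentiableAt ℂ (fun v : ℂ => (1 - v) ^ ((-1 / 4 : ℂ))) u := by
      exact DifferentiableAt.cpow (differentiable_const (1:ℂ)
        |>.sub differentiable_id).differentiableAt (differentiableAt_const _) hslit
    exact (differentiableAt_const w0).mul
      ((differentiableAt_const _).mul (hcpow.neg.cexp))
  have hGA : AnalyticOnNhd ℂ G (slitDisc ρ) := hGdiff.analyticOnNhd (slitDisc_isOpen ρ)
  -- u0 is in the slit disc
  have hu0ball : u0 ∈ Metric.ball (1 : ℂ) ρ := by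
    have := hVball hV0
    rw [Metric.mem_ball, Prod.dist_eq, max_lt_iff] at this
    exact this.1
  have hu0S : u0 ∈ slitDisc ρ := mem_slitDisc_of_slit hu0ball (hVslit _ hV0)
  -- h = G near u0
  have hfg : h =ᶠ[nhds u0] G := by
    have hU0 : IsOpen {u : ℂ | (u, w0) ∈ V} :=
      hVopen.preimage (continuous_id.prodMk continuous_const)
    filter_upwards [hU0.mem_nhds hV0] with u hu
    have h1 := heq (u, w0) hu
    have hune : u ≠ 1 := by
      have := hVslit (u, w0) hu 1 le_rfl
      simpa using this
    rw [sub_eq_zero] at h1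
    simp only [hh_def, hG_def]
    rw [← h1]
    unfold gSlit
    rw [if_neg hune]
  -- identity theorem on the slit disc
  have hSsub : slitDisc ρ ⊆ Metric.ball (1 : ℂ) ρ := fun z hz => hz.1
  have key : Set.EqOn h G (slitDisc ρ) :=
    (hhA.mono hSsub).eqOn_of_preconnected_of_eventuallyEq hGA
      (slitDisc_isPreconnected hρ) hu0S hfg
  -- value of h at real points 1 - t
  have hval : ∀ k : ℕ, 1 ≤ k → (((k : ℝ))⁻¹ ^ 4 : ℝ) < ρ →
      ‖h (1 - ((((k : ℝ))⁻¹ ^ 4 : ℝ) : ℂ))‖ = ‖w0‖ * (1 / 3) * Real.exp (-(k : ℝ)) := by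
    intro k hk htρ
    set t : ℝ := ((k : ℝ))⁻¹ ^ 4 with ht_def
    have hk0 : (0 : ℝ) < k := by exact_mod_cast Nat.lt_of_lt_of_le Nat.zero_lt_one hk
    have ht0 : 0 < t := by positivity
    have hzS : (1 - (t : ℂ)) ∈ slitDisc ρ := by
      constructor
      · rw [Metric.mem_ball, dist_eq_norm]
        simp only [sub_sub_cancel_left, norm_neg, Complex.norm_real, Real.norm_eq_abs]
        rwa [abs_of_pos ht0]
      · right
        simp only [Complex.sub_re, Complex.one_re, Complex.ofReal_re, Set.mem_setOf_eq]
        linarith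
    have h1 : h (1 - (t : ℂ)) = G (1 - (t : ℂ)) := key hzS
    have h2 : (1 : ℂ) - (1 - (t : ℂ)) = (t : ℂ) := by ring
    have h3 : (t : ℂ) ^ ((-1 / 4 : ℂ)) = ((k : ℝ) : ℂ) := by
      have e1 : ((-1 / 4 : ℂ)) = (((-1 / 4 : ℝ)) : ℂ) := by norm_num
      rw [e1, ← Complex.ofReal_cpow ht0.le]
      congr 1
      have e2 : t = (k : ℝ) ^ (-(4 : ℕ) : ℝ) := by
        rw [Real.rpow_neg hk0.le, Real.rpow_natCast, ht_def, inv_pow]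
      rw [e2, ← Real.rpow_mul hk0.le]
      norm_num
    rw [h1, hG_def]
    simp only [h2, h3]
    rw [norm_mul, norm_mul, Complex.norm_exp]
    have e4 : (-(((k : ℝ)) : ℂ)).re = -(k : ℝ) := by simp
    have e5 : ‖(1 / 3 : ℂ)‖ = 1 / 3 := by norm_num
    rw [e4, e5]
    ring
  -- t_k tends to zero
  have htend : Filter.Tendsto (fun k : ℕ => (((k : ℝ))⁻¹ ^ 4 : ℝ)) Filter.atTop (nhds 0) := by
    have h1 : Filter.Tendsto (fun k : ℕ => ((k : ℝ))⁻¹) Filter.atTop (nhds 0) :=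
      tendsto_inv_atTop_nhds_zero_nat
    have := h1.pow 4
    simpa using this
  -- analyze h at 1
  have h1A : AnalyticAt ℂ h 1 := hhA 1 (by simp [Metric.mem_ball, hρ])
  rcases eq_or_ne (analyticOrderAt h 1) ⊤ with hord | hord
  · -- h vanishes identically near 1 : contradiction with hval
    rw [analyticOrderAt_eq_top] at hord
    rw [Metric.eventually_nhds_iff] at hord
    obtain ⟨ε, hε, hord⟩ := hord
    have hev : ∀ᶠ k : ℕ in Filter.atTop, (((k : ℝ))⁻¹ ^ 4 : ℝ) < min ε ρ ∧ 1 ≤ k := by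
      refine (htend.eventually (gt_mem_nhds (lt_min hε hρ))).and (Filter.eventually_ge_atTop 1)
    obtain ⟨k, hklt, hk1⟩ := hev.exists
    set t : ℝ := ((k : ℝ))⁻¹ ^ 4 with ht_def
    have ht0 : 0 < t := by
      have hk0 : (0 : ℝ) < k := by exact_mod_cast Nat.lt_of_lt_of_le Nat.zero_lt_one hk1
      positivity
    have hz0 : h (1 - (t : ℂ)) = 0 := by
      apply hord
      rw [dist_eq_norm]
      simp only [sub_sub_cancel_left, norm_neg, Complex.norm_real, Real.norm_eq_abs]
      rw [abs_of_pos ht0]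
      exact lt_of_lt_of_le hklt (min_le_left _ _)
    have hvk := hval k hk1 (lt_of_lt_of_le hklt (min_le_right _ _))
    rw [hz0] at hvk
    simp only [norm_zero] at hvk
    have : 0 < ‖w0‖ * (1 / 3) * Real.exp (-(k : ℝ)) := by
      have := Real.exp_pos (-(k : ℝ))
      have hw0' : 0 < ‖w0‖ := norm_pos_iff.mpr hw0
      positivity
    linarith
  · -- finite order n
    obtain ⟨n, hn⟩ := WithTop.ne_top_iff_exists.mp hord
    have hn' : ∃ (g : ℂ → ℂ), AnalyticAt ℂ g 1 ∧ g 1 ≠ 0 ∧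
        ∀ᶠ z in nhds (1 : ℂ), h z = (z - 1) ^ n • g z := by
      rw [← h1A.analyticOrderAt_eq_natCast]
      exact_mod_cast hn.symm
    obtain ⟨φ, hφA, hφ1, hφeq⟩ := hn'
    set L : ℝ := ‖φ 1‖ with hL_def
    have hL : 0 < L := norm_pos_iff.mpr hφ1
    have hφcont : ContinuousAt (fun z => ‖φ z‖) 1 := hφA.continuousAt.norm
    have hφbig : ∀ᶠ z in nhds (1 : ℂ), L / 2 < ‖φ z‖ :=
      hφcont.eventually (eventually_gt_nhds (by linarith))
    rw [Metric.eventually_nhds_iff] at hφeq hφbig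
    obtain ⟨ε1, hε1, hφeq⟩ := hφeq
    obtain ⟨ε2, hε2, hφbig⟩ := hφbig
    -- eventual lower bound
    have hev : ∀ᶠ k : ℕ in Filter.atTop,
        (((k : ℝ))⁻¹ ^ 4 : ℝ) < min (min ε1 ε2) ρ ∧ 1 ≤ k := by
      refine (htend.eventually (gt_mem_nhds (lt_min (lt_min hε1 hε2) hρ))).and
        (Filter.eventually_ge_atTop 1)
    have hkey : ∀ᶠ k : ℕ in Filter.atTop,
        L / 2 ≤ ‖w0‖ * (1 / 3) * ((k : ℝ) ^ (4 * n) * Real.exp (-(k : ℝ))) := by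
      filter_upwards [hev] with k ⟨hklt, hk1⟩
      set t : ℝ := ((k : ℝ))⁻¹ ^ 4 with ht_def
      have hk0 : (0 : ℝ) < k := by exact_mod_cast Nat.lt_of_lt_of_le Nat.zero_lt_one hk1
      have ht0 : 0 < t := by positivity
      have hdist : dist ((1 : ℂ) - (t : ℂ)) 1 < min (min ε1 ε2) ρ := by
        rw [dist_eq_norm]
        simp only [sub_sub_cancel_left, norm_neg, Complex.norm_real, Real.norm_eq_abs]
        rwa [abs_of_pos ht0]
      have hvk := hval k hk1 (lt_of_lt_of_le hklt (min_le_right _ _))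
      have heq' : h (1 - (t : ℂ)) = ((1 - (t : ℂ)) - 1) ^ n • φ (1 - (t : ℂ)) :=
        hφeq (lt_of_lt_of_le hdist (le_trans (min_le_left _ _) (min_le_left _ _)))
      have hbig' : L / 2 < ‖φ (1 - (t : ℂ))‖ :=
        hφbig (lt_of_lt_of_le hdist (le_trans (min_le_left _ _) (min_le_right _ _)))
      have hnorm : ‖h (1 - (t : ℂ))‖ = t ^ n * ‖φ (1 - (t : ℂ))‖ := by
        rw [heq', smul_eq_mul, norm_mul, norm_pow]
        congr 2
        have : (1 - (t : ℂ)) - 1 = -(t : ℂ) := by ring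
        rw [this, norm_neg, Complex.norm_real, Real.norm_eq_abs, abs_of_pos ht0]
      rw [hvk] at hnorm
      -- t^n * k^(4n) = 1
      have htk : t ^ n * (k : ℝ) ^ (4 * n) = 1 := by
        rw [ht_def, ← pow_mul, inv_pow, mul_comm 4 n, inv_mul_cancel₀]
        positivity
      have h2 : t ^ n * (L / 2) ≤ ‖w0‖ * (1 / 3) * Real.exp (-(k : ℝ)) := by
        rw [hnorm]
        exact mul_le_mul_of_nonneg_left hbig'.le (by positivity)
      calc L / 2 = (t ^ n * (k : ℝ) ^ (4 * n)) * (L / 2) := by rw [htk]; ring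
        _ = (k : ℝ) ^ (4 * n) * (t ^ n * (L / 2)) := by ring
        _ ≤ (k : ℝ) ^ (4 * n) * (‖w0‖ * (1 / 3) * Real.exp (-(k : ℝ))) :=
            mul_le_mul_of_nonneg_left h2 (by positivity)
        _ = ‖w0‖ * (1 / 3) * ((k : ℝ) ^ (4 * n) * Real.exp (-(k : ℝ))) := by ring
    -- but the right-hand side tends to 0
    have hA0 : Filter.Tendsto (fun k : ℕ => ‖w0‖ * (1 / 3) * ((k : ℝ) ^ (4 * n)
        * Real.exp (-(k : ℝ)))) Filter.atTop (nhds 0) := by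
      have h1 : Filter.Tendsto (fun x : ℝ => x ^ (4 * n) * Real.exp (-x))
          Filter.atTop (nhds 0) := Real.tendsto_pow_mul_exp_neg_atTop_nhds_zero (4 * n)
      have h2 := (h1.comp tendsto_natCast_atTop_atTop (α := ℕ)).const_mul (‖w0‖ * (1 / 3))
      simpa [Function.comp, mul_zero] using h2
    have := ge_of_tendsto hA0 hkey
    linarith
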